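/- Let 𝔽_q be a finite field with q elements and let P, Q ∈ 𝔽_q[X,Y] be polynomials with total degrees a = deg P and b = deg Q. For any 0 ≤ r, s < q, the Cartier operator Λ_{r,s} applied to the polynomial P·Q^{q-1} yields a polynomial (i.e., there is a polynomial R ∈ 𝔽_q[X,Y] whose associated power series equals Λ_{r,s}(P·Q^{q-1})) whose total degree satisfies q · deg(Λ_{r,s}(P·Q^{q-1})) ≤ a + b(q−1); in particular, if a + b ≥ 1 then deg(Λ_{r,s}(P·Q^{q-1})) < a + b. -/

import Mathlib

/-!
Extracting the coefficients of `A = P·Q^{q-1}` at the exponents `q • d + (r, s)` gives a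
polynomial `R`, and every monomial `X^d` of `R` comes from a monomial of `A` of degree
`q · deg d + r + s`. Hence `q · deg R ≤ deg A ≤ a + b(q - 1)`, and the right-hand side is
smaller than `q(a + b)` as soon as `a + b ≥ 1`, since
`q = |𝔽_q| ≥ 2`.
-/

/-- The Cartier operator `Λ_{r,s}` on two-variable formal power series:
`Λ_{r,s}(∑ a_{m,n} X^m Y^n) = ∑ a_{mq+r, nq+s} X^m Y^n`.  Two-variable power
series are encoded as `MvPowerSeries (Fin 2) F` (variable `0` is `X`,
variable `1` is `Y`). -/
noncomputable def cartier {F : Type*} [Field F] (q r s : ℕ)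
    (A : MvPowerSeries (Fin 2) F) : MvPowerSeries (Fin 2) F :=
  fun d : Fin 2 →₀ ℕ =>
    MvPowerSeries.coeff (σ := Fin 2) (R := F)
      (Finsupp.single 0 (d 0 * q + r) + Finsupp.single 1 (d 1 * q + s)) A

noncomputable def MvPolynomial.cartierOp {σ R : Type*} [CommSemiring R] (q : ℕ) (hq : 0 < q)
    (ρ : σ →₀ ℕ) (A : MvPolynomial σ R) : MvPolynomial σ R :=
  AddMonoidAlgebra.ofCoeff <| Finsupp.comapDomain (fun d => q • d + ρ) (AddMonoidAlgebra.coeff A)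
    (fun _ _ _ _ h => (nsmul_right_injective hq.ne') (add_right_cancel h))

namespace MvPolynomial

variable {σ R : Type*} [CommSemiring R]

@[simp]
theorem coeff_cartierOp (q : ℕ) (hq : 0 < q) (ρ : σ →₀ ℕ) (A : MvPolynomial σ R)
    (d : σ →₀ ℕ) : (cartierOp q hq ρ A).coeff d = A.coeff (q • d + ρ) :=
  rfl

theorem mul_totalDegree_cartierOp_le (q : ℕ) (hq : 0 < q) (ρ : σ →₀ ℕ)
    (A : MvPolynomial σ R) : q * (cartierOp q hq ρ A).totalDegree ≤ A.totalDegree := by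
  rw [totalDegree, Finset.mul_sup₀]
  refine Finset.sup_le fun d hd => ?_
  have hmem : q • d + ρ ∈ A.support := by
    rwa [mem_support_iff, ← coeff_cartierOp q hq, ← mem_support_iff]
  calc q * d.degree
      ≤ (q • d + ρ).degree := by simp only [map_add, map_nsmul, smul_eq_mul, le_add_right le_rfl]
    _ ≤ A.totalDegree := le_totalDegree hmem

theorem totalDegree_mul_pow_le (P Q : MvPolynomial σ R) (n : ℕ) :
    (P * Q ^ n).totalDegree ≤ P.totalDegree + n * Q.totalDegree :=
  (totalDegree_mul P _).trans (Nat.add_le_add_left (totalDegree_pow Q n) _)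

end MvPolynomial

theorem coe_cartierOp_eq_cartier {F : Type*} [Field F] (q r s : ℕ) (hq : 0 < q)
    (A : MvPolynomial (Fin 2) F) :
    (MvPolynomial.cartierOp q hq (Finsupp.single 0 r + Finsupp.single 1 s) A :
        MvPowerSeries (Fin 2) F) = cartier q r s A := by
  ext d
  change A.coeff (q • d + _) = A.coeff _
  congr 1
  ext i
  fin_cases i <;> simp [mul_comm q]

theorem add_mul_pred_lt_mul_add {q a b : ℕ} (hq : 2 ≤ q) (hab : 1 ≤ a + b) :
    a + b * (q - 1) < q * (a + b) := by
  obtain ⟨k, rfl⟩ : ∃ k, q = k + 1 + 1 := ⟨q - 2, by omega⟩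
  rw [Nat.add_sub_cancel]
  nlinarith

theorem cartier_degree_bound_general
    (F : Type*) [Field F] [Fintype F] (q : ℕ) (hq : Fintype.card F = q)
    (r s : ℕ)
    (P Q : MvPolynomial (Fin 2) F) (a b : ℕ)
    (ha : P.totalDegree = a) (hb : Q.totalDegree = b) :
    ∃ R : MvPolynomial (Fin 2) F,
      (R : MvPowerSeries (Fin 2) F)
          = cartier q r s ((P * Q ^ (q - 1) : MvPolynomial (Fin 2) F) :
              MvPowerSeries (Fin 2) F) ∧
      q * R.totalDegree ≤ a + b * (q - 1) ∧
      (1 ≤ a + b → R.totalDegree < a + b) := by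
  have hq2 : 2 ≤ q := hq ▸ Fintype.one_lt_card
  have hq0 : 0 < q := by omega
  set R := MvPolynomial.cartierOp q hq0 (Finsupp.single 0 r + Finsupp.single 1 s) (P * Q ^ (q - 1))
  have hdeg : q * R.totalDegree ≤ a + b * (q - 1) := by
    calc q * R.totalDegree ≤ (P * Q ^ (q - 1)).totalDegree :=
          MvPolynomial.mul_totalDegree_cartierOp_le q hq0 _ _
      _ ≤ a + (q - 1) * b := ha ▸ hb ▸ MvPolynomial.totalDegree_mul_pow_le P Q (q - 1)
      _ = a + b * (q - 1) := by rw [mul_comm]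
  refine ⟨R, coe_cartierOp_eq_cartier q r s hq0 _, hdeg, fun hab => ?_⟩
  exact Nat.lt_of_mul_lt_mul_left (hdeg.trans_lt (add_mul_pred_lt_mul_add hq2 hab))

/-- **Degree bound in the proof of Proposition 2 of the paper.**
For polynomials `P, Q ∈ 𝔽_q[X,Y]` of total degrees `a` and `b`, the Cartier
operator applied to `P·Q^{q-1}` is (the power series of) a polynomial `R`
with `q · deg R ≤ a + b(q−1)`; in particular `deg R < a + b` when `a + b ≥ 1`. -/
theorem cartier_degree_bound
    (F : Type*) [Field F] [Fintype F] (q : ℕ) (hq : Fintype.card F = q)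
    (r s : ℕ) (hr : r < q) (hs : s < q)
    (P Q : MvPolynomial (Fin 2) F) (a b : ℕ)
    (ha : P.totalDegree = a) (hb : Q.totalDegree = b) :
    ∃ R : MvPolynomial (Fin 2) F,
      (R : MvPowerSeries (Fin 2) F)
          = cartier q r s ((P * Q ^ (q - 1) : MvPolynomial (Fin 2) F) :
              MvPowerSeries (Fin 2) F) ∧
      q * R.totalDegree ≤ a + b * (q - 1) ∧
      (1 ≤ a + b → R.totalDegree < a + b) :=
  cartier_degree_bound_general F q hq r s P Q a b ha hb
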